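/- arXiv:2106.12531 — 5 statements merged into one kernel-verified Lean document; each statement's English description precedes it below -/
import Mathlib

section
/- Let N be an odd positive integer and for n ∈ {1,…,N} set c_n = n − 1 − (N−1)/2. Let L_s > 0, z_g > 0, and let g : ℝ → ℂ be integrable with g(z) = 0 for all |z| > z_g/2 (i.e., g is supported in an interval of total length z_g centered at 0). Define G(κ) = ∫_ℝ g(z) e^{−iκz} dz. If L_r ≥ L_s + z_g, then for all n, m ∈ {1,…,N} the double integral H_{nm} = ∫_{−L_r/2}^{L_r/2} ∫_{−L_s/2}^{L_s/2} g(r − s) · e^{−i 2π c_n r/L_s} · (1/√L_s) e^{i 2π c_m s/L_s} ds dr satisfies H_{nm} = √L_s · G(2π c_n/L_s) if n = m, and H_{nm} = 0 if n ≠ m. -/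
open MeasureTheory Filter Real

/-!
Swap the two integrals. For every source point `s`, the shifted response `g (· - s)` is supported
inside the receiver segment because `L_r ≥ L_s + z_g`, so the inner integral over `r` is the full
Fourier transform `G κ_n · e^{-i κ_n s}`, where `κ_n = 2π c_n / L_s`. What remains is
`∫ e^{i (κ_m - κ_n) s} ds` over one period `L_s`, which vanishes unless `c_m - c_n = m - n` is zero.
-/

theorem integral_exp_two_pi_int_mul_I_div {L : ℝ} (hL : L ≠ 0) (a : ℝ) (k : ℤ) :
    ∫ s in a..a + L, Complex.exp (2 * π * Complex.I * k / L * s) =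
      if k = 0 then (L : ℂ) else 0 := by
  split_ifs with hk
  · simp [hk]
  have hL' : (L : ℂ) ≠ 0 := by exact_mod_cast hL
  have hc : 2 * π * Complex.I * k / L ≠ 0 := by
    have : (π : ℂ) ≠ 0 := by exact_mod_cast pi_ne_zero
    simp [hk, hL, this, Complex.I_ne_zero]
  have hperiod : 2 * π * Complex.I * k / L * ↑(a + L) =
      2 * π * Complex.I * k / L * a + k * (2 * π * Complex.I) := by
    push_cast; field_simp
  rw [integral_exp_mul_complex hc, hperiod, Complex.exp_add, Complex.exp_int_mul_two_pi_mul_I,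
    mul_one, sub_self, zero_div]

theorem intervalIntegral_comp_sub_right_eq_integral {E : Type*} [NormedAddCommGroup E]
    [NormedSpace ℝ E] {f : ℝ → E} {a b s : ℝ} (hab : a ≤ b)
    (hf : ∀ z ∉ Set.Icc (a - s) (b - s), f z = 0) :
    ∫ r in a..b, f (r - s) = ∫ z, f z := by
  rw [intervalIntegral.integral_comp_sub_right, intervalIntegral.integral_of_le (by linarith),
    ← integral_Icc_eq_integral_Ioc, setIntegral_eq_integral_of_forall_compl_eq_zero hf]

theorem apply_eq_zero_of_notMem_Icc_sub {E : Type*} [Zero E] {f : ℝ → E} {w a b s : ℝ}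
    (hf : ∀ z, w / 2 < |z| → f z = 0) (ha : a + w / 2 ≤ s) (hb : s + w / 2 ≤ b) :
    ∀ z ∉ Set.Icc (a - s) (b - s), f z = 0 := by
  intro z hz
  rw [Set.mem_Icc, not_and_or, not_le, not_le] at hz
  refine hf z (lt_abs.mpr ?_)
  rcases hz with hz | hz <;> [right; left] <;> linarith

theorem intervalIntegral_comp_sub_mul_exp {g : ℝ → ℂ} {a b s : ℝ} (hab : a ≤ b)
    (hg : ∀ z ∉ Set.Icc (a - s) (b - s), g z = 0) (κ : ℝ) :
    ∫ r in a..b, g (r - s) * Complex.exp (-Complex.I * κ * r) =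
      (∫ z, g z * Complex.exp (-Complex.I * κ * z)) * Complex.exp (-Complex.I * κ * s) := by
  have hshift : ∀ r : ℝ, g (r - s) * Complex.exp (-Complex.I * κ * r) =
      g (r - s) * Complex.exp (-Complex.I * κ * ↑(r - s)) *
        Complex.exp (-Complex.I * κ * s) := by
    intro r
    rw [mul_assoc (g _), ← Complex.exp_add]
    push_cast
    ring_nf
  simp only [hshift]
  rw [← integral_mul_const]
  exact intervalIntegral_comp_sub_right_eq_integral
    (f := fun z => g z * Complex.exp (-Complex.I * κ * z) * Complex.exp (-Complex.I * κ * s)) hab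
    fun z hz => by simp [hg z hz]

theorem integrableOn_comp_sub_mul {g : ℝ → ℂ} {k : ℝ × ℝ → ℂ} (hg : Integrable g)
    (hk : Continuous k) {s t : Set ℝ} (hs : IsCompact s) (ht : IsCompact t) :
    IntegrableOn (fun p => g (p.1 - p.2) * k p) (s ×ˢ t) := by
  have hconv : IntegrableOn (fun p : ℝ × ℝ => g (p.1 - p.2)) (Set.univ ×ˢ t) := by
    have := (integrableOn_const (μ := volume) (C := (1 : ℂ))
      ht.measure_lt_top.ne).convolution_integrand (ContinuousLinearMap.mul ℝ ℂ) hg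
    rw [IntegrableOn, Measure.volume_eq_prod, ← Measure.prod_restrict, Measure.restrict_univ]
    simpa using this
  exact (hconv.mono_set (Set.prod_mono (Set.subset_univ s) le_rfl)).mul_continuousOn
    hk.continuousOn (hs.prod ht)

theorem intervalIntegral_swap_comp_sub_mul {g φ ψ : ℝ → ℂ} (hg : Integrable g)
    (hφ : Continuous φ) (hψ : Continuous ψ) {a b c d : ℝ} (hab : a ≤ b) (hcd : c ≤ d) :
    ∫ r in a..b, ∫ s in c..d, g (r - s) * (φ r * ψ s) =
      ∫ s in c..d, ∫ r in a..b, g (r - s) * (φ r * ψ s) := by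
  simp only [intervalIntegral.integral_of_le hab, intervalIntegral.integral_of_le hcd]
  apply integral_integral_swap
  rw [Measure.prod_restrict, ← Measure.volume_eq_prod]
  exact (integrableOn_comp_sub_mul hg (by fun_prop) isCompact_Icc isCompact_Icc).mono_set
    (Set.prod_mono Set.Ioc_subset_Icc_self Set.Ioc_subset_Icc_self)

theorem wdm_orthogonality_with_oversized_receiver_general
    (N : ℕ)
    (Ls zg : ℝ) (hLs : 0 < Ls) (hzg : 0 < zg)
    (g : ℝ → ℂ) (hg : Integrable g)
    (hgsupp : ∀ z : ℝ, zg / 2 < |z| → g z = 0)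
    (G : ℝ → ℂ)
    (hG : ∀ κ : ℝ, G κ = ∫ z : ℝ, g z * Complex.exp (-Complex.I * κ * z))
    (Lr : ℝ) (hLr : Ls + zg ≤ Lr)
    (n m : ℕ)
    (cn cm : ℝ)
    (hcn : cn = (n : ℝ) - 1 - ((N : ℝ) - 1) / 2)
    (hcm : cm = (m : ℝ) - 1 - ((N : ℝ) - 1) / 2) :
    (∫ r in (-(Lr / 2))..(Lr / 2), ∫ s in (-(Ls / 2))..(Ls / 2),
        g (r - s) * Complex.exp (-Complex.I * (2 * π * cn * r / Ls)) *
          ((1 / Real.sqrt Ls : ℝ) : ℂ) * Complex.exp (Complex.I * (2 * π * cm * s / Ls)))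
      = if n = m then ((Real.sqrt Ls : ℝ) : ℂ) * G (2 * π * cn / Ls) else 0 := by
  set κ : ℝ := 2 * π * cn / Ls
  set c : ℂ := ((1 / Real.sqrt Ls : ℝ) : ℂ)
  have hintegrand : ∀ r s : ℝ,
      g (r - s) * Complex.exp (-Complex.I * (2 * π * cn * r / Ls)) * c *
        Complex.exp (Complex.I * (2 * π * cm * s / Ls)) =
      g (r - s) * (Complex.exp (-Complex.I * κ * r) *
        (c * Complex.exp (Complex.I * (2 * π * cm * s / Ls)))) := by
    intro r s
    simp only [κ]
    push_cast
    ring_nf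
  have hinner : ∀ s ∈ Set.uIcc (-(Ls / 2)) (Ls / 2),
      ∫ r in -(Lr / 2)..Lr / 2, g (r - s) * (Complex.exp (-Complex.I * κ * r) *
        (c * Complex.exp (Complex.I * (2 * π * cm * s / Ls)))) =
      c * G κ * Complex.exp (2 * π * Complex.I * ((m : ℤ) - n : ℤ) / Ls * s) := by
    intro s hs
    rw [Set.uIcc_of_le (by linarith), Set.mem_Icc] at hs
    have hsupp := apply_eq_zero_of_notMem_Icc_sub hgsupp
      (show -(Lr / 2) + zg / 2 ≤ s by linarith) (show s + zg / 2 ≤ Lr / 2 by linarith)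
    simp only [← mul_assoc (g _)]
    rw [intervalIntegral.integral_mul_const, intervalIntegral_comp_sub_mul_exp (by linarith) hsupp,
      ← hG]
    have hphase : Complex.exp (-Complex.I * κ * s) *
        Complex.exp (Complex.I * (2 * π * cm * s / Ls)) =
        Complex.exp (2 * π * Complex.I * ((m : ℤ) - n : ℤ) / Ls * s) := by
      rw [← Complex.exp_add]
      simp only [κ, hcn, hcm]
      push_cast
      ring_nf
    rw [← hphase]
    ring
  simp only [hintegrand]
  rw [intervalIntegral_swap_comp_sub_mul hg (by fun_prop) (by fun_prop) (by linarith)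
    (by linarith), intervalIntegral.integral_congr hinner, intervalIntegral.integral_const_mul]
  have hperiod := integral_exp_two_pi_int_mul_I_div hLs.ne' (-(Ls / 2)) ((m : ℤ) - n)
  rw [show -(Ls / 2) + Ls = Ls / 2 by ring] at hperiod
  rw [hperiod]
  by_cases hnm : n = m
  · have hsqrt : c * Ls = Real.sqrt Ls := by
      simp only [c]
      rw [← Complex.ofReal_mul, one_div_mul_eq_div, Real.div_sqrt]
    simp only [hnm, sub_self, if_true]
    rw [← hsqrt]
    ring
  · have hmn : (m : ℤ) - n ≠ 0 := sub_ne_zero.mpr (by exact_mod_cast Ne.symm hnm)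
    simp only [hnm, hmn, if_false, mul_zero]

/-- Corollary 2 of the paper: if the spatially-invariant channel response `g` is supported in
`[−z_g/2, z_g/2]` and the receiver excess length satisfies `L_r ≥ L_s + z_g`, then the WDM
coupling coefficients are exactly orthogonal:
`H_{nm} = √L_s · G(2π c_n/L_s)` for `n = m` and `H_{nm} = 0` for `n ≠ m`. -/
theorem wdm_orthogonality_with_oversized_receiver
    (N : ℕ) (hN : Odd N) (hNpos : 0 < N)
    (Ls zg : ℝ) (hLs : 0 < Ls) (hzg : 0 < zg)
    (g : ℝ → ℂ) (hg : Integrable g)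
    (hgsupp : ∀ z : ℝ, zg / 2 < |z| → g z = 0)
    (G : ℝ → ℂ)
    (hG : ∀ κ : ℝ, G κ = ∫ z : ℝ, g z * Complex.exp (-Complex.I * κ * z))
    (Lr : ℝ) (hLr : Ls + zg ≤ Lr)
    (n m : ℕ) (hn : n ∈ Finset.Icc 1 N) (hm : m ∈ Finset.Icc 1 N)
    (cn cm : ℝ)
    (hcn : cn = (n : ℝ) - 1 - ((N : ℝ) - 1) / 2)
    (hcm : cm = (m : ℝ) - 1 - ((N : ℝ) - 1) / 2) :
    (∫ r in (-(Lr / 2))..(Lr / 2), ∫ s in (-(Ls / 2))..(Ls / 2),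
        g (r - s) * Complex.exp (-Complex.I * (2 * π * cn * r / Ls)) *
          ((1 / Real.sqrt Ls : ℝ) : ℂ) * Complex.exp (Complex.I * (2 * π * cm * s / Ls)))
      = if n = m then ((Real.sqrt Ls : ℝ) : ℂ) * G (2 * π * cn / Ls) else 0 :=
  wdm_orthogonality_with_oversized_receiver_general N Ls zg hLs hzg g hg hgsupp G hG Lr hLr n m cn
    cm hcn hcm
end

section
/- Let S : ℝ → ℂ be bounded, measurable and integrable, and let a, b ∈ ℝ with a ≠ b. Then lim_{L→∞} (L/(2π)) ∫_ℝ S(κ) · sinc((κ − a)·L/(2π)) · sinc((κ − b)·L/(2π)) dκ = 0. -/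
/-! Up to the rescaling `sinc x = Real.sinc (π x)`, the claim is about
`t ∫ S(κ) sinc((κ - a) t) sinc((κ - b) t) dκ` with `t = L / 2` and Mathlib's unnormalized `sinc`.
Since `|x| |sinc x| ≤ 1`, and one of `|κ - a|`, `|κ - b|` is at least `|a - b| / 2`, the factor `t`
is absorbed by one of the two kernels:
`|t| |sinc((κ - a) t)| |sinc((κ - b) t)| ≤ 2 |a - b|⁻¹ (|sinc((κ - a) t)| + |sinc((κ - b) t)|)`.
It remains to see `∫ ‖S κ‖ |sinc((κ - c) t)| dκ → 0`, which is dominated convergence: the integrand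
tends to `0` off the null set `{c}` and is dominated by `‖S‖`. -/

open MeasureTheory Filter Real

noncomputable def sinc (x : ℝ) : ℝ :=
  if x = 0 then 1 else Real.sin (π * x) / (π * x)

open Topology

namespace Real

theorem abs_mul_abs_sinc_le_one (x : ℝ) : |x| * |sinc x| ≤ 1 := by
  rcases eq_or_ne x 0 with rfl | hx
  · simp
  rw [sinc_of_ne_zero hx, abs_div, mul_div_cancel₀ _ (abs_ne_zero.mpr hx)]
  exact abs_sin_le_one x

theorem abs_mul_abs_sinc_mul_le {x : ℝ} (hx : x ≠ 0) (t : ℝ) : |t| * |sinc (x * t)| ≤ |x|⁻¹ := by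
  rw [← one_div, le_div_iff₀' (abs_pos.mpr hx), ← mul_assoc, ← abs_mul]
  exact abs_mul_abs_sinc_le_one _

theorem tendsto_sinc_mul_atTop {x : ℝ} (hx : x ≠ 0) :
    Tendsto (fun t => sinc (x * t)) atTop (𝓝 0) := by
  have hbound : ∀ᶠ t in atTop, ‖sinc (x * t)‖ ≤ |x|⁻¹ * t⁻¹ := by
    filter_upwards [eventually_gt_atTop 0] with t ht
    rw [Real.norm_eq_abs, ← div_eq_mul_inv, le_div_iff₀ ht, mul_comm]
    simpa [abs_of_pos ht] using abs_mul_abs_sinc_mul_le hx t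
  simpa using squeeze_zero_norm' hbound (by simpa using tendsto_inv_atTop_zero.const_mul |x|⁻¹)

theorem abs_mul_abs_sinc_mul_abs_sinc_le {x y : ℝ} (hxy : x ≠ y) (t : ℝ) :
    |t| * (|sinc (x * t)| * |sinc (y * t)|) ≤
      2 * |x - y|⁻¹ * (|sinc (x * t)| + |sinc (y * t)|) := by
  wlog hx : |x - y| ≤ 2 * |x| generalizing x y
  · have hy : |y - x| ≤ 2 * |y| := by
      rw [abs_sub_comm]
      linarith [abs_sub x y]
    have := this hxy.symm hy
    rw [abs_sub_comm] at this
    linarith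
  have hxy' : 0 < |x - y| := abs_pos.mpr (sub_ne_zero.mpr hxy)
  have hx0 : x ≠ 0 := by
    rintro rfl
    simp only [abs_zero, mul_zero] at hx
    linarith
  have hxt : |t| * |sinc (x * t)| ≤ 2 * |x - y|⁻¹ :=
    calc |t| * |sinc (x * t)| ≤ |x|⁻¹ := abs_mul_abs_sinc_mul_le hx0 t
      _ ≤ 2 * |x - y|⁻¹ := by
          rw [← div_eq_mul_inv, le_div_iff₀ hxy', inv_mul_le_iff₀ (abs_pos.mpr hx0)]
          linarith
  calc |t| * (|sinc (x * t)| * |sinc (y * t)|) = |t| * |sinc (x * t)| * |sinc (y * t)| := by ring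
    _ ≤ 2 * |x - y|⁻¹ * |sinc (y * t)| := by gcongr
    _ ≤ 2 * |x - y|⁻¹ * (|sinc (x * t)| + |sinc (y * t)|) := by
        gcongr
        exact le_add_of_nonneg_left (abs_nonneg _)

end Real

section Integral

variable {E : Type*} [NormedAddCommGroup E] {μ : Measure ℝ} {f : ℝ → E}

theorem MeasureTheory.Integrable.norm_mul_abs_sinc (hf : Integrable f μ) (c t : ℝ) :
    Integrable (fun κ => ‖f κ‖ * |Real.sinc ((κ - c) * t)|) μ :=
  hf.norm.mul_bdd
    (show Continuous fun κ => |Real.sinc ((κ - c) * t)| by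
      fun_prop [Real.continuous_sinc]).aestronglyMeasurable
    (Eventually.of_forall fun κ => by simpa using Real.abs_sinc_le_one _)

theorem tendsto_integral_norm_mul_abs_sinc [NullSingletonClass μ] (hf : Integrable f μ) (c : ℝ) :
    Tendsto (fun t => ∫ κ, ‖f κ‖ * |Real.sinc ((κ - c) * t)| ∂μ) atTop (𝓝 0) := by
  have hlim : ∀ᵐ κ ∂μ, Tendsto (fun t => ‖f κ‖ * |Real.sinc ((κ - c) * t)|) atTop (𝓝 0) := by
    filter_upwards [μ.ae_ne c] with κ hκ
    simpa using ((Real.tendsto_sinc_mul_atTop (sub_ne_zero.mpr hκ)).abs).const_mul ‖f κ‖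
  simpa using tendsto_integral_filter_of_dominated_convergence (fun κ => ‖f κ‖)
    (Eventually.of_forall fun t => (hf.norm_mul_abs_sinc c t).aestronglyMeasurable)
    (Eventually.of_forall fun t => Eventually.of_forall fun κ => by
      simpa [abs_mul] using mul_le_of_le_one_right (norm_nonneg _) (Real.abs_sinc_le_one _))
    hf.norm hlim

end Integral

theorem tendsto_mul_integral_mul_sinc_mul_sinc {μ : Measure ℝ} [NullSingletonClass μ]
    {S : ℝ → ℂ} (hS : Integrable S μ) {a b : ℝ} (hab : a ≠ b) :
    Tendsto (fun t : ℝ => (t : ℂ) * ∫ κ, S κ * (Real.sinc ((κ - a) * t) : ℂ) *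
      (Real.sinc ((κ - b) * t) : ℂ) ∂μ) atTop (𝓝 0) := by
  set C := 2 * |b - a|⁻¹
  set I := fun c t => ∫ κ, ‖S κ‖ * |Real.sinc ((κ - c) * t)| ∂μ
  have hbound : ∀ t : ℝ, ‖(t : ℂ) * ∫ κ, S κ * (Real.sinc ((κ - a) * t) : ℂ) *
      (Real.sinc ((κ - b) * t) : ℂ) ∂μ‖ ≤ C * (I a t + I b t) := by
    intro t
    rw [← integral_const_mul, ← integral_add (hS.norm_mul_abs_sinc a t)
      (hS.norm_mul_abs_sinc b t), ← integral_const_mul]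
    refine norm_integral_le_of_norm_le
      (((hS.norm_mul_abs_sinc a t).add (hS.norm_mul_abs_sinc b t)).const_mul C)
      (Eventually.of_forall fun κ => ?_)
    have hκ := Real.abs_mul_abs_sinc_mul_abs_sinc_le ((sub_right_injective (b := κ)).ne hab) t
    rw [sub_sub_sub_cancel_left] at hκ
    simp only [norm_mul, Complex.norm_real, Real.norm_eq_abs]
    calc |t| * (‖S κ‖ * |Real.sinc ((κ - a) * t)| * |Real.sinc ((κ - b) * t)|)
        = ‖S κ‖ * (|t| * (|Real.sinc ((κ - a) * t)| * |Real.sinc ((κ - b) * t)|)) := by ring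
      _ ≤ ‖S κ‖ * (C * (|Real.sinc ((κ - a) * t)| + |Real.sinc ((κ - b) * t)|)) := by gcongr
      _ = _ := by ring
  have hI : Tendsto (fun t => C * (I a t + I b t)) atTop (𝓝 0) := by
    simpa using ((tendsto_integral_norm_mul_abs_sinc hS a).add
      (tendsto_integral_norm_mul_abs_sinc hS b)).const_mul C
  exact squeeze_zero_norm hbound hI

theorem sinc_eq_sinc_pi_mul (x : ℝ) : _root_.sinc x = Real.sinc (π * x) := by
  unfold _root_.sinc Real.sinc
  simp [pi_ne_zero]

theorem sinc_product_distinct_centers_vanishes_general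
    (S : ℝ → ℂ) (hSint : Integrable S) (a b : ℝ) (hab : a ≠ b) :
    Tendsto
      (fun L : ℝ =>
        ((L / (2 * π) : ℝ) : ℂ) * ∫ κ : ℝ,
          S κ * ((_root_.sinc ((κ - a) * L / (2 * π)) : ℝ) : ℂ) *
            ((_root_.sinc ((κ - b) * L / (2 * π)) : ℝ) : ℂ))
      atTop (nhds 0) := by
  have hhalf : Tendsto (fun L : ℝ => L / 2) atTop atTop := tendsto_id.atTop_div_const two_pos
  have h := ((tendsto_mul_integral_mul_sinc_mul_sinc hSint hab).comp hhalf).const_mul (π⁻¹ : ℂ)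
  simp only [mul_zero, Function.comp_def] at h
  refine h.congr fun L => ?_
  have hscale (x : ℝ) : π * (x * L / (2 * π)) = x * (L / 2) := by field_simp
  simp only [sinc_eq_sinc_pi_mul, hscale, ← mul_assoc]
  push_cast
  ring

/-- Off-diagonal vanishing of products of scaled sinc kernels with distinct centers:
`(L/(2π)) ∫ S(κ) sinc((κ − a) L/(2π)) sinc((κ − b) L/(2π)) dκ → 0` as `L → ∞` when `a ≠ b`. -/
theorem sinc_product_distinct_centers_vanishes
    (S : ℝ → ℂ) (hSbdd : ∃ M : ℝ, ∀ κ : ℝ, ‖S κ‖ ≤ M) (hSmeas : Measurable S)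
    (hSint : Integrable S) (a b : ℝ) (hab : a ≠ b) :
    Tendsto
      (fun L : ℝ =>
        ((L / (2 * π) : ℝ) : ℂ) * ∫ κ : ℝ,
          S κ * ((_root_.sinc ((κ - a) * L / (2 * π)) : ℝ) : ℂ) *
            ((_root_.sinc ((κ - b) * L / (2 * π)) : ℝ) : ℂ))
      atTop (nhds 0) :=
  sinc_product_distinct_centers_vanishes_general S hSint a b hab
end

section
/- Let κ > 0 and z ∈ ℝ with z ≠ 0. Then ∫_{−π}^{π} ∫_{π/3}^{2π/3} (sin θ)/(2π) · e^{−i κ z cos θ} dθ dφ = sin(κ z/2)/(κ z/2). -/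
/-!
The integrand does not depend on `φ`, so the outer integral only contributes the factor `2π`.
Since `sin θ dθ = -d(cos θ)`, the inner integrand has the antiderivative
`-exp(-iκz cos θ)/(-iκz)`. The elevation sector `[π/3, 2π/3]` is symmetric about the equator,
so `cos θ` runs between `1/2` and `-1/2`, and the boundary terms combine by Euler's formula into
`2 sin(κz/2)/(κz)`.
-/

open MeasureTheory Filter Real

theorem Complex.exp_neg_I_mul_sub_exp_I_mul (x : ℂ) :
    Complex.exp (-Complex.I * x) - Complex.exp (Complex.I * x)
      = -2 * Complex.I * Complex.sin x := by
  rw [neg_mul, mul_comm, ← neg_mul, Complex.exp_mul_I, Complex.exp_mul_I, Complex.cos_neg,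
    Complex.sin_neg]
  ring

theorem integral_sin_mul_cexp_mul_cos (a b : ℝ) {c : ℂ} (hc : c ≠ 0) :
    ∫ θ in a..b, (Real.sin θ : ℂ) * Complex.exp (c * Real.cos θ)
      = (Complex.exp (c * Real.cos a) - Complex.exp (c * Real.cos b)) / c := by
  have hderiv : ∀ θ ∈ Set.uIcc a b,
      HasDerivAt (fun t : ℝ => -(Complex.exp (c * Real.cos t) / c))
        ((Real.sin θ : ℂ) * Complex.exp (c * Real.cos θ)) θ := by
    intro θ _
    have hcos : HasDerivAt (fun t : ℝ => (Real.cos t : ℂ)) (-Real.sin θ : ℝ) θ :=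
      (Real.hasDerivAt_cos θ).ofReal_comp
    have hval : -(Complex.exp (c * Real.cos θ) * (c * (-Real.sin θ : ℝ)) / c)
        = (Real.sin θ : ℂ) * Complex.exp (c * Real.cos θ) := by
      push_cast
      field_simp
    rw [← hval]
    exact ((hcos.const_mul c).cexp.div_const c).neg
  rw [intervalIntegral.integral_eq_sub_of_hasDerivAt hderiv
    (ContinuousOn.intervalIntegrable (by fun_prop))]
  ring

theorem integral_sin_mul_cexp_neg_I_mul_cos_pi_sub (a : ℝ) {s : ℝ} (hs : s ≠ 0) :
    ∫ θ in a..(π - a), (Real.sin θ : ℂ) * Complex.exp (-Complex.I * s * Real.cos θ)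
      = (2 * Real.sin (s * Real.cos a) / s : ℝ) := by
  have hc : -Complex.I * s ≠ 0 := by simp [hs]
  have hlower : -Complex.I * s * (Real.cos a : ℂ) = -Complex.I * (s * Real.cos a : ℝ) := by
    push_cast
    ring
  have hupper : -Complex.I * s * ((-Real.cos a : ℝ) : ℂ) = Complex.I * (s * Real.cos a : ℝ) := by
    push_cast
    ring
  rw [integral_sin_mul_cexp_mul_cos _ _ hc, Real.cos_pi_sub, hlower, hupper,
    Complex.exp_neg_I_mul_sub_exp_I_mul]
  push_cast
  field_simp

/-- Non-isotropic EMI correlation claim of the paper: with waves uniformly distributed over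
elevation `θ ∈ [π/3, 2π/3)` and azimuth `φ ∈ [−π, π)`, the spatial correlation along the
`z`-axis is `sin(κz/2)/(κz/2)`. -/
theorem nonisotropic_emi_correlation
    (κ : ℝ) (hκ : 0 < κ) (z : ℝ) (hz : z ≠ 0) :
    (∫ φ in (-π)..π, ∫ θ in (π / 3)..(2 * π / 3),
        ((Real.sin θ / (2 * π) : ℝ) : ℂ) *
          Complex.exp (-Complex.I * κ * ((z * Real.cos θ : ℝ) : ℂ)))
      = ((Real.sin (κ * z / 2) / (κ * z / 2) : ℝ) : ℂ) := by
  have hκz : κ * z ≠ 0 := mul_ne_zero hκ.ne' hz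
  have hintegrand : ∀ θ : ℝ, ((Real.sin θ / (2 * π) : ℝ) : ℂ) *
      Complex.exp (-Complex.I * κ * ((z * Real.cos θ : ℝ) : ℂ))
      = ((2 * π)⁻¹ : ℝ) *
        ((Real.sin θ : ℂ) * Complex.exp (-Complex.I * (κ * z : ℝ) * Real.cos θ)) := by
    intro θ
    push_cast
    ring_nf
  have inner : ∫ θ in (π / 3)..(2 * π / 3), ((Real.sin θ / (2 * π) : ℝ) : ℂ) *
      Complex.exp (-Complex.I * κ * ((z * Real.cos θ : ℝ) : ℂ))
      = ((2 * π)⁻¹ * (2 * Real.sin (κ * z / 2) / (κ * z)) : ℝ) := by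
    rw [intervalIntegral.integral_congr (fun θ _ => hintegrand θ),
      intervalIntegral.integral_const_mul, show 2 * π / 3 = π - π / 3 by ring,
      integral_sin_mul_cexp_neg_I_mul_cos_pi_sub _ hκz, Real.cos_pi_div_three, mul_one_div,
      ← Complex.ofReal_mul]
  rw [intervalIntegral.integral_congr (fun φ _ => inner), intervalIntegral.integral_const,
    Complex.real_smul]
  push_cast
  field_simp
  ring
end

section
/- Let N be an odd positive integer and for m ∈ {1,…,N} set c_m = m − 1 − (N−1)/2 and f_m = c_m/T, where T > 0. Let T_g > 0 and T_s ≥ T + T_g, let x₁,…,x_N ∈ ℂ, and define x(t) = (1/√T_s) Σ_{m=1}^{N} x_m e^{i 2π f_m t} for 0 ≤ t ≤ T_s and x(t) = 0 otherwise. Let g : ℝ → ℂ be integrable with g(t) = 0 for t ∉ [0, T_g], and let G(f) = ∫_0^{T_g} g(t) e^{−i 2π f t} dt. Then for every n ∈ {1,…,N}, ∫_{T_g}^{T_g + T} (g ∗ x)(t) · e^{−i 2π f_n t} dt = (T/√T_s) · G(f_n) · x_n, where (g ∗ x)(t) = ∫_ℝ g(τ) x(t − τ) dτ. -/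
open MeasureTheory Filter Real

/-! For `t` in the observation window `[Tg, Tg + T]` and `τ` in the support `[0, Tg]` of `g`, the
argument `t - τ` stays in `[0, Ts]`, so the rectangular window of `x` is invisible to the
convolution: there `g ∗ x` is `g` convolved with the unwindowed trigonometric polynomial, namely
`∑ₘ (Xₘ / √Ts) G(fₘ) e^{2πi fₘ t}`. The subcarriers are spaced by `1 / T`, so over a window of
length `T` projecting onto `e^{-2πi fₙ t}` kills every term except `m = n`, which contributes `T`. -/

lemma exp_I_mul_two_pi_mul_sub (ν t τ : ℝ) :
    Complex.exp (Complex.I * (2 * π * ν * ((t - τ : ℝ) : ℂ))) =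
      Complex.exp (Complex.I * (2 * π * ν * t)) * Complex.exp (-Complex.I * (2 * π * ν * τ)) := by
  rw [← Complex.exp_add]
  push_cast
  ring_nf

lemma MeasureTheory.Integrable.mul_exp_neg_I_mul {μ : Measure ℝ} {g : ℝ → ℂ}
    (hg : Integrable g μ) (ν : ℝ) :
    Integrable (fun τ => g τ * Complex.exp (-Complex.I * (2 * π * ν * τ))) μ := by
  refine hg.mul_bdd (c := 1) (by fun_prop) (Eventually.of_forall fun τ => le_of_eq ?_)
  rw [show -Complex.I * (2 * π * ν * τ) = Complex.I * ((-(2 * π * ν * τ) : ℝ) : ℂ) by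
    push_cast; ring, Complex.norm_exp_I_mul_ofReal]

lemma integral_eq_intervalIntegral_of_eq_zero_off_Icc {E : Type*} [NormedAddCommGroup E]
    [NormedSpace ℝ E] {F : ℝ → E} {a b : ℝ} (hab : a ≤ b) (hF : ∀ t ∉ Set.Icc a b, F t = 0) :
    ∫ t, F t = ∫ t in a..b, F t := by
  rw [intervalIntegral.integral_of_le hab, ← integral_Icc_eq_integral_Ioc,
    setIntegral_eq_integral_of_forall_compl_eq_zero hF]

lemma mul_comp_sub_eq_of_eqOn_Icc {g x p : ℝ → ℂ} {Tg Ts t : ℝ}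
    (hg : ∀ τ ∉ Set.Icc 0 Tg, g τ = 0) (hx : Set.EqOn x p (Set.Icc 0 Ts))
    (ht : t ∈ Set.Icc Tg Ts) (τ : ℝ) : g τ * x (t - τ) = g τ * p (t - τ) := by
  by_cases hτ : τ ∈ Set.Icc 0 Tg
  · rw [hx ⟨by linarith [ht.1, hτ.2], by linarith [ht.2, hτ.1]⟩]
  · rw [hg τ hτ, zero_mul, zero_mul]

lemma integral_mul_sum_exp_I_mul_sub {ι : Type*} {μ : Measure ℝ} {g : ℝ → ℂ}
    (hg : Integrable g μ) (s : Finset ι) (A : ι → ℂ) (ν : ι → ℝ) (t : ℝ) :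
    ∫ τ, g τ * ∑ m ∈ s, A m * Complex.exp (Complex.I * (2 * π * ν m * ((t - τ : ℝ) : ℂ))) ∂μ =
      ∑ m ∈ s, A m * (∫ τ, g τ * Complex.exp (-Complex.I * (2 * π * ν m * τ)) ∂μ) *
        Complex.exp (Complex.I * (2 * π * ν m * t)) := by
  simp_rw [exp_I_mul_two_pi_mul_sub, Finset.mul_sum]
  rw [integral_finsetSum _ fun m _ => ?_]
  · refine Finset.sum_congr rfl fun m _ => ?_
    rw [← integral_const_mul, ← integral_mul_const]
    congr 1 with τ
    ring
  · simpa only [mul_left_comm (g _), ← mul_assoc] using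
      (hg.mul_exp_neg_I_mul (ν m)).const_mul (A m * Complex.exp (Complex.I * (2 * π * ν m * t)))

lemma integral_exp_I_mul_two_pi_int_div {T : ℝ} (hT : T ≠ 0) (a : ℝ) (k : ℤ) :
    ∫ t in a..a + T, Complex.exp (Complex.I * (2 * π * (k / T) * t)) =
      if k = 0 then (T : ℂ) else 0 := by
  split_ifs with hk
  · simp [hk]
  · have hc : Complex.I * (2 * π * (k / T)) ≠ 0 := by simp [hk, hT, pi_ne_zero]
    have hperiod : Complex.I * (2 * π * (k / T)) * (T : ℂ) = k * (2 * π * Complex.I) := by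
      have : (T : ℂ) ≠ 0 := by exact_mod_cast hT
      field_simp
    have hshape : ∀ t : ℝ, Complex.I * (2 * π * (k / T) * t) = Complex.I * (2 * π * (k / T)) * t :=
      fun t => by ring
    simp_rw [hshape]
    rw [integral_exp_mul_complex hc, Complex.ofReal_add, mul_add, Complex.exp_add, hperiod,
      Complex.exp_int_mul_two_pi_mul_I, mul_one, sub_self, zero_div]

lemma integral_sum_exp_I_mul_mul_exp_neg {T : ℝ} (hT : T ≠ 0) (a : ℝ) {s : Finset ℕ} {n : ℕ}
    (hn : n ∈ s) (B : ℕ → ℂ) {ν : ℕ → ℝ} (hν : ∀ m ∈ s, ν m = ν n + ((m : ℝ) - n) / T) :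
    ∫ t in a..a + T, (∑ m ∈ s, B m * Complex.exp (Complex.I * (2 * π * ν m * t))) *
        Complex.exp (-Complex.I * (2 * π * ν n * t)) = T * B n := by
  calc _ = ∫ t in a..a + T, ∑ m ∈ s,
          B m * Complex.exp (Complex.I * (2 * π * (((m - n : ℤ) : ℂ) / T) * t)) := by
        refine intervalIntegral.integral_congr fun t _ => ?_
        simp only [Finset.sum_mul]
        refine Finset.sum_congr rfl fun m hm => ?_
        rw [hν m hm, mul_assoc, ← Complex.exp_add]
        push_cast
        ring_nf
    _ = ∑ m ∈ s, B m *
          ∫ t in a..a + T, Complex.exp (Complex.I * (2 * π * (((m - n : ℤ) : ℂ) / T) * t)) := by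
        rw [intervalIntegral.integral_finsetSum fun m _ =>
          (by fun_prop : Continuous _).intervalIntegrable _ _]
        simp_rw [intervalIntegral.integral_const_mul]
    _ = T * B n := by
        simp_rw [integral_exp_I_mul_two_pi_int_div hT, sub_eq_zero, Nat.cast_inj, mul_ite,
          mul_zero, Finset.sum_ite_eq' s n, if_pos hn, mul_comm]

theorem ofdm_orthogonality_cyclic_prefix_general
    (N : ℕ)
    (T Tg Ts : ℝ) (hT : 0 < T) (hTg : 0 < Tg) (hTs : T + Tg ≤ Ts)
    (c : ℕ → ℝ) (hc : ∀ m, c m = (m : ℝ) - 1 - ((N : ℝ) - 1) / 2)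
    (f : ℕ → ℝ) (hf : ∀ m, f m = c m / T)
    (X : ℕ → ℂ)
    (x : ℝ → ℂ)
    (hx : ∀ t : ℝ, x t =
      if t ∈ Set.Icc (0 : ℝ) Ts then
        ((1 / Real.sqrt Ts : ℝ) : ℂ) *
          ∑ m ∈ Finset.Icc 1 N, X m * Complex.exp (Complex.I * (2 * π * f m * t))
      else 0)
    (g : ℝ → ℂ) (hg : Integrable g)
    (hgsupp : ∀ t : ℝ, t ∉ Set.Icc (0 : ℝ) Tg → g t = 0)
    (G : ℝ → ℂ)
    (hG : ∀ ν : ℝ, G ν = ∫ t in (0 : ℝ)..Tg, g t * Complex.exp (-Complex.I * (2 * π * ν * t)))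
    (n : ℕ) (hn : n ∈ Finset.Icc 1 N) :
    (∫ t in Tg..(Tg + T),
        (∫ τ : ℝ, g τ * x (t - τ)) * Complex.exp (-Complex.I * (2 * π * f n * t)))
      = ((T / Real.sqrt Ts : ℝ) : ℂ) * G (f n) * X n := by
  have hG_eq : ∀ ν : ℝ, ∫ τ, g τ * Complex.exp (-Complex.I * (2 * π * ν * τ)) = G ν :=
    fun ν => by
      rw [hG, integral_eq_intervalIntegral_of_eq_zero_off_Icc hTg.le fun τ hτ => by
        rw [hgsupp τ hτ, zero_mul]]
  have hconv : ∀ t ∈ Set.uIcc Tg (Tg + T), ∫ τ, g τ * x (t - τ) =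
      ((1 / Real.sqrt Ts : ℝ) : ℂ) *
        ∑ m ∈ Finset.Icc 1 N, X m * G (f m) * Complex.exp (Complex.I * (2 * π * f m * t)) := by
    intro t ht
    rw [Set.uIcc_of_le (by linarith)] at ht
    have hwin : Set.EqOn x (fun s => ((1 / Real.sqrt Ts : ℝ) : ℂ) *
        ∑ m ∈ Finset.Icc 1 N, X m * Complex.exp (Complex.I * (2 * π * f m * s)))
        (Set.Icc 0 Ts) := fun s hs => by rw [hx, if_pos hs]
    simp_rw [mul_comp_sub_eq_of_eqOn_Icc hgsupp hwin ⟨ht.1, by linarith [ht.2]⟩,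
      mul_left_comm (g _), integral_const_mul, integral_mul_sum_exp_I_mul_sub hg, hG_eq]
  have hgrid : ∀ m ∈ Finset.Icc 1 N, f m = f n + ((m : ℝ) - n) / T := fun m _ => by
    rw [hf, hf, hc, hc]
    field_simp
    ring
  rw [intervalIntegral.integral_congr fun t ht => congrArg (· * _) (hconv t ht)]
  simp_rw [mul_assoc ((1 / Real.sqrt Ts : ℝ) : ℂ)]
  rw [intervalIntegral.integral_const_mul,
    integral_sum_exp_I_mul_mul_exp_neg hT.ne' Tg hn _ hgrid]
  push_cast
  ring

/-- OFDM orthogonality with a cyclic-prefix-length symbol (Section IV-A, eqs. (35)–(37)):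
with symbol duration `T_s ≥ T + T_g` and observation window `[T_g, T_g + T]`, projecting the
channel output onto subcarrier `n` yields `y_n = (T/√T_s) G(f_n) x_n`. -/
theorem ofdm_orthogonality_cyclic_prefix
    (N : ℕ) (hN : Odd N) (hNpos : 0 < N)
    (T Tg Ts : ℝ) (hT : 0 < T) (hTg : 0 < Tg) (hTs : T + Tg ≤ Ts)
    (c : ℕ → ℝ) (hc : ∀ m, c m = (m : ℝ) - 1 - ((N : ℝ) - 1) / 2)
    (f : ℕ → ℝ) (hf : ∀ m, f m = c m / T)
    (X : ℕ → ℂ)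
    (x : ℝ → ℂ)
    (hx : ∀ t : ℝ, x t =
      if t ∈ Set.Icc (0 : ℝ) Ts then
        ((1 / Real.sqrt Ts : ℝ) : ℂ) *
          ∑ m ∈ Finset.Icc 1 N, X m * Complex.exp (Complex.I * (2 * π * f m * t))
      else 0)
    (g : ℝ → ℂ) (hg : Integrable g)
    (hgsupp : ∀ t : ℝ, t ∉ Set.Icc (0 : ℝ) Tg → g t = 0)
    (G : ℝ → ℂ)
    (hG : ∀ ν : ℝ, G ν = ∫ t in (0 : ℝ)..Tg, g t * Complex.exp (-Complex.I * (2 * π * ν * t)))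
    (n : ℕ) (hn : n ∈ Finset.Icc 1 N) :
    (∫ t in Tg..(Tg + T),
        (∫ τ : ℝ, g τ * x (t - τ)) * Complex.exp (-Complex.I * (2 * π * f n * t)))
      = ((T / Real.sqrt Ts : ℝ) : ℂ) * G (f n) * X n :=
  ofdm_orthogonality_cyclic_prefix_general N T Tg Ts hT hTg hTs c hc f hf X x hx g hg hgsupp G hG n
    hn
end

section
/- Let N be an odd positive integer and for m ∈ {1,…,N} set c_m = m − 1 − (N−1)/2 and f_m = c_m/T, where T > 0. Let T_g > 0 and T_r ≥ T + T_g, let x₁,…,x_N ∈ ℂ, and define x(t) = (1/√T) Σ_{m=1}^{N} x_m e^{i 2π f_m t} for 0 ≤ t ≤ T and x(t) = 0 otherwise. Let g : ℝ → ℂ be integrable with g(t) = 0 for t ∉ [0, T_g], and let G(f) = ∫_0^{T_g} g(t) e^{−i 2π f t} dt. Then for every n ∈ {1,…,N}, ∫_{0}^{T_r} (g ∗ x)(t) · e^{−i 2π f_n t} dt = √T · G(f_n) · x_n, where (g ∗ x)(t) = ∫_ℝ g(τ) x(t − τ) dτ. -/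
/-!
The channel output `g ∗ x` is supported in `[0, T + T_g] ⊆ [0, T_r]`, so projecting it onto
subcarrier `n` over the observation window is the same as evaluating its Fourier transform at
`f_n`. By the convolution theorem this is `ĝ(f_n) · x̂(f_n) = G(f_n) · x̂(f_n)`, and since the
subcarriers are spaced by `1 / T` they are orthogonal on `[0, T]`, which leaves
`x̂(f_n) = √T · X_n`.
-/

open MeasureTheory Real
open FourierTransform Convolution Pointwise

theorem fourier_eq_intervalIntegral_of_support_subset {f : ℝ → ℂ} {a b : ℝ} (hab : a ≤ b)
    (hf : Function.support f ⊆ Set.Icc a b) (ν : ℝ) :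
    𝓕 f ν = ∫ t in a..b, f t * Complex.exp (-Complex.I * (2 * π * ν * t)) := by
  have hf' : ∀ t ∉ Set.Icc a b, f t * Complex.exp (-Complex.I * (2 * π * ν * t)) = 0 :=
    fun t ht => by rw [Function.support_subset_iff'.1 hf t ht, zero_mul]
  rw [intervalIntegral.integral_of_le hab, ← integral_Icc_eq_integral_Ioc,
    setIntegral_eq_integral_of_forall_compl_eq_zero hf', Real.fourier_real_eq_integral_exp_smul]
  congr 1 with t
  rw [smul_eq_mul, mul_comm]
  push_cast
  ring_nf

theorem integral_exp_eq_zero_of_mul_eq_int {T ν : ℝ} {k : ℤ} (hk : k ≠ 0) (hν : ν * T = k) :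
    ∫ t in (0 : ℝ)..T, Complex.exp (Complex.I * (2 * π * ν * t)) = 0 := by
  have hν0 : ν ≠ 0 := by
    rintro rfl
    exact hk (by exact_mod_cast (zero_mul T ▸ hν).symm)
  have hc : Complex.I * (2 * π * ν) ≠ 0 := by simp [hν0, Real.pi_ne_zero]
  have hperiod : Complex.I * (2 * π * ν) * T = k * (2 * π * Complex.I) := by
    rw [← Complex.ofReal_intCast, ← hν]
    push_cast
    ring
  have hlin : ∀ t : ℝ, Complex.I * (2 * π * ν * t) = Complex.I * (2 * π * ν) * t :=
    fun t => by ring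
  simp_rw [hlin]
  rw [integral_exp_mul_complex hc, hperiod, Complex.exp_int_mul_two_pi_mul_I]
  simp

theorem integral_sum_exp_mul_exp_neg {T d : ℝ} (hT : T ≠ 0) {f : ℕ → ℝ}
    (hf : ∀ m, f m = (m + d) / T) (s : Finset ℕ) (X : ℕ → ℂ) {n : ℕ} (hn : n ∈ s) :
    ∫ t in (0 : ℝ)..T, (∑ m ∈ s, X m * Complex.exp (Complex.I * (2 * π * f m * t))) *
      Complex.exp (-Complex.I * (2 * π * f n * t)) = T * X n := by
  have hmodes : ∀ m (t : ℝ), X m * Complex.exp (Complex.I * (2 * π * f m * t)) *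
      Complex.exp (-Complex.I * (2 * π * f n * t)) =
      X m * Complex.exp (Complex.I * (2 * π * (f m - f n : ℝ) * t)) := by
    intro m t
    rw [mul_assoc, ← Complex.exp_add]
    push_cast
    ring_nf
  have hterm : ∀ m ∈ s,
      ∫ t in (0 : ℝ)..T, X m * Complex.exp (Complex.I * (2 * π * (f m - f n : ℝ) * t)) =
        if m = n then T * X n else 0 := by
    intro m _
    rw [intervalIntegral.integral_const_mul]
    split_ifs with hmn
    · subst hmn
      simp [mul_comm]
    · have hk : ((m : ℤ) - n) ≠ 0 := sub_ne_zero.2 (by exact_mod_cast hmn)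
      rw [integral_exp_eq_zero_of_mul_eq_int hk, mul_zero]
      rw [hf, hf]
      push_cast
      field_simp
      ring
  simp_rw [Finset.sum_mul, hmodes]
  rw [intervalIntegral.integral_finsetSum
      fun m _ => (by fun_prop : Continuous _).intervalIntegrable _ _,
    Finset.sum_congr rfl hterm, Finset.sum_ite_eq' s n, if_pos hn]

theorem fourier_indicator_Icc_sum_exp {T d : ℝ} (hT : 0 < T) {f : ℕ → ℝ}
    (hf : ∀ m, f m = (m + d) / T) (a : ℂ) (s : Finset ℕ) (X : ℕ → ℂ) {n : ℕ} (hn : n ∈ s) :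
    𝓕 ((Set.Icc 0 T).indicator fun t : ℝ =>
        a * ∑ m ∈ s, X m * Complex.exp (Complex.I * (2 * π * f m * t))) (f n) = a * T * X n := by
  rw [fourier_eq_intervalIntegral_of_support_subset hT.le Set.support_indicator_subset]
  calc _ = ∫ t in (0 : ℝ)..T, a * ((∑ m ∈ s, X m * Complex.exp (Complex.I * (2 * π * f m * t))) *
          Complex.exp (-Complex.I * (2 * π * f n * t))) :=
        intervalIntegral.integral_congr fun t ht => by
          rw [Set.uIcc_of_le hT.le] at ht
          simp only [Set.indicator_of_mem ht, mul_assoc]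
    _ = a * T * X n := by
        rw [intervalIntegral.integral_const_mul, integral_sum_exp_mul_exp_neg hT.ne' hf s X hn,
          mul_assoc]

theorem ofdm_orthogonality_extended_observation_general
    (N : ℕ)
    (T Tg Tr : ℝ) (hT : 0 < T) (hTg : 0 < Tg) (hTr : T + Tg ≤ Tr)
    (c : ℕ → ℝ) (hc : ∀ m, c m = (m : ℝ) - 1 - ((N : ℝ) - 1) / 2)
    (f : ℕ → ℝ) (hf : ∀ m, f m = c m / T)
    (X : ℕ → ℂ)
    (x : ℝ → ℂ)
    (hx : ∀ t : ℝ, x t =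
      if t ∈ Set.Icc (0 : ℝ) T then
        ((1 / Real.sqrt T : ℝ) : ℂ) *
          ∑ m ∈ Finset.Icc 1 N, X m * Complex.exp (Complex.I * (2 * π * f m * t))
      else 0)
    (g : ℝ → ℂ) (hg : Integrable g)
    (hgsupp : ∀ t : ℝ, t ∉ Set.Icc (0 : ℝ) Tg → g t = 0)
    (G : ℝ → ℂ)
    (hG : ∀ ν : ℝ, G ν = ∫ t in (0 : ℝ)..Tg, g t * Complex.exp (-Complex.I * (2 * π * ν * t)))
    (n : ℕ) (hn : n ∈ Finset.Icc 1 N) :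
    (∫ t in (0 : ℝ)..Tr,
        (∫ τ : ℝ, g τ * x (t - τ)) * Complex.exp (-Complex.I * (2 * π * f n * t)))
      = ((Real.sqrt T : ℝ) : ℂ) * G (f n) * X n := by
  set symbol : ℝ → ℂ := fun t => ((1 / Real.sqrt T : ℝ) : ℂ) *
    ∑ m ∈ Finset.Icc 1 N, X m * Complex.exp (Complex.I * (2 * π * f m * t))
  have hx_eq : x = (Set.Icc 0 T).indicator symbol :=
    funext fun t => by rw [hx t, Set.indicator_apply]
  have hx_int : Integrable x :=
    hx_eq ▸ (by fun_prop : Continuous symbol).integrableOn_Icc.integrable_indicator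
      measurableSet_Icc
  have hg_supp : Function.support g ⊆ Set.Icc 0 Tg := Function.support_subset_iff'.2 hgsupp
  have hconv_supp : Function.support (g ⋆[ContinuousLinearMap.mul ℂ ℂ] x) ⊆ Set.Icc 0 Tr :=
    calc Function.support (g ⋆[ContinuousLinearMap.mul ℂ ℂ] x)
        ⊆ Set.Icc 0 Tg + Set.Icc 0 T := (support_convolution_subset _).trans
          (Set.add_subset_add hg_supp (hx_eq ▸ Set.support_indicator_subset))
      _ ⊆ Set.Icc (0 + 0) (Tg + T) := Set.Icc_add_Icc_subset _ _ _ _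
      _ ⊆ Set.Icc 0 Tr := Set.Icc_subset_Icc (by norm_num) (by linarith)
  have hx_fourier : 𝓕 x (f n) = Real.sqrt T * X n := by
    rw [hx_eq, fourier_indicator_Icc_sum_exp hT (d := -1 - ((N : ℝ) - 1) / 2)
      (fun m => by rw [hf, hc]; ring) _ _ X hn, ← Complex.ofReal_mul, one_div_mul_eq_div,
      Real.div_sqrt]
  calc _ = 𝓕 (g ⋆[ContinuousLinearMap.mul ℂ ℂ] x) (f n) :=
        (fourier_eq_intervalIntegral_of_support_subset (by linarith) hconv_supp _).symm
    _ = 𝓕 g (f n) * 𝓕 x (f n) := Real.fourier_mul_convolution_eq hg hx_int _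
    _ = _ := by
      rw [fourier_eq_intervalIntegral_of_support_subset hTg.le hg_supp, ← hG, hx_fourier]
      ring

/-- OFDM orthogonality with an oversized observation window (Section IV-A, eqs. (38)–(39)):
with symbol duration `T` (no cyclic prefix) and observation window `[0, T_r]` with
`T_r ≥ T + T_g`, projecting the channel output onto subcarrier `n` yields
`y_n = √T · G(f_n) · x_n`. -/
theorem ofdm_orthogonality_extended_observation
    (N : ℕ) (hN : Odd N) (hNpos : 0 < N)
    (T Tg Tr : ℝ) (hT : 0 < T) (hTg : 0 < Tg) (hTr : T + Tg ≤ Tr)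
    (c : ℕ → ℝ) (hc : ∀ m, c m = (m : ℝ) - 1 - ((N : ℝ) - 1) / 2)
    (f : ℕ → ℝ) (hf : ∀ m, f m = c m / T)
    (X : ℕ → ℂ)
    (x : ℝ → ℂ)
    (hx : ∀ t : ℝ, x t =
      if t ∈ Set.Icc (0 : ℝ) T then
        ((1 / Real.sqrt T : ℝ) : ℂ) *
          ∑ m ∈ Finset.Icc 1 N, X m * Complex.exp (Complex.I * (2 * π * f m * t))
      else 0)
    (g : ℝ → ℂ) (hg : Integrable g)
    (hgsupp : ∀ t : ℝ, t ∉ Set.Icc (0 : ℝ) Tg → g t = 0)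
    (G : ℝ → ℂ)
    (hG : ∀ ν : ℝ, G ν = ∫ t in (0 : ℝ)..Tg, g t * Complex.exp (-Complex.I * (2 * π * ν * t)))
    (n : ℕ) (hn : n ∈ Finset.Icc 1 N) :
    (∫ t in (0 : ℝ)..Tr,
        (∫ τ : ℝ, g τ * x (t - τ)) * Complex.exp (-Complex.I * (2 * π * f n * t)))
      = ((Real.sqrt T : ℝ) : ℂ) * G (f n) * X n :=
  ofdm_orthogonality_extended_observation_general N T Tg Tr hT hTg hTr c hc f hf X x hx g hg hgsupp
    G hG n hn
end
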